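/- arXiv:2410.13814 — 2 statements merged into one kernel-verified Lean document; each statement's English description precedes it below -/
import Mathlib

section
/- Let A = {x₁, …, x_m} ⊆ (a,b) with a < x₁ < ⋯ < x_m < b, let ρ : ℝ → ℝ be continuously differentiable and strictly positive, let h : ℝ \ A → ℝ be bounded and continuously differentiable with bounded derivative, let η : ℝ → ℝ be smooth with compact support in (a,b), and let g : ℝ → ℝ be smooth with compact support. Then ∫_{(a,b)\A} η g' h ρ dλ = −∫_{(a,b)\A} (η h ρ)' g dλ + Σ_{i=1}^m η(x_i) g(x_i) ρ(x_i) (h_l(x_i) − h_r(x_i)), where h_l(x_i) and h_r(x_i) denote the left and right limits of h at x_i. -/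
open MeasureTheory Filter Topology

lemma auxInt {s : Set ℝ} (hso : IsOpen s) (hb : Bornology.IsBounded s) {f : ℝ → ℝ}
    (hf : ContinuousOn f s) {C : ℝ} (hC : ∀ y ∈ s, |f y| ≤ C) : IntegrableOn f s := by
  refine ⟨hf.aestronglyMeasurable hso.measurableSet,
    HasFiniteIntegral.restrict_of_bounded (C := C) hb.measure_lt_top ?_⟩
  filter_upwards [ae_restrict_mem hso.measurableSet] with y hy
  simpa [Real.norm_eq_abs] using hC y hy

lemma bound6 {c d : ℝ} {ρ η g : ℝ → ℝ} (hρ : ContDiff ℝ 1 ρ) (hη : ContDiff ℝ (⊤ : ℕ∞) η)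
    (hg : ContDiff ℝ (⊤ : ℕ∞) g) :
    ∃ C : ℝ, 0 ≤ C ∧ ∀ y ∈ Set.Icc c d, |η y| ≤ C ∧ |deriv η y| ≤ C ∧ |g y| ≤ C ∧
      |deriv g y| ≤ C ∧ |ρ y| ≤ C ∧ |deriv ρ y| ≤ C := by
  obtain ⟨C1, h1⟩ := (isCompact_Icc (a := c) (b := d)).exists_bound_of_continuousOn
    hη.continuous.continuousOn
  obtain ⟨C2, h2⟩ := (isCompact_Icc (a := c) (b := d)).exists_bound_of_continuousOn
    (hη.continuous_deriv (by simp)).continuousOn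
  obtain ⟨C3, h3⟩ := (isCompact_Icc (a := c) (b := d)).exists_bound_of_continuousOn
    hg.continuous.continuousOn
  obtain ⟨C4, h4⟩ := (isCompact_Icc (a := c) (b := d)).exists_bound_of_continuousOn
    (hg.continuous_deriv (by simp)).continuousOn
  obtain ⟨C5, h5⟩ := (isCompact_Icc (a := c) (b := d)).exists_bound_of_continuousOn
    hρ.continuous.continuousOn
  obtain ⟨C6, h6⟩ := (isCompact_Icc (a := c) (b := d)).exists_bound_of_continuousOn
    (hρ.continuous_deriv le_rfl).continuousOn
  refine ⟨max 0 (max (max (max C1 C2) (max C3 C4)) (max C5 C6)), le_max_left _ _, fun y hy => ?_⟩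
  have e1 := h1 y hy; have e2 := h2 y hy; have e3 := h3 y hy; have e4 := h4 y hy
  have e5 := h5 y hy; have e6 := h6 y hy
  simp only [Real.norm_eq_abs] at e1 e2 e3 e4 e5 e6
  refine ⟨e1.trans ?_, e2.trans ?_, e3.trans ?_, e4.trans ?_, e5.trans ?_, e6.trans ?_⟩ <;>
    simp [le_max_iff, le_refl]

lemma intf1 {ρ η g : ℝ → ℝ} (hρ : ContDiff ℝ 1 ρ) (hη : ContDiff ℝ (⊤ : ℕ∞) η) (hg : ContDiff ℝ (⊤ : ℕ∞) g)
    {c d : ℝ} {h : ℝ → ℝ} {M : ℝ} {s : Set ℝ} (hs : IsOpen s) (hsub : s ⊆ Set.Icc c d)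
    (hhc : ContinuousOn h s) (hM : ∀ y ∈ s, |h y| ≤ M) :
    IntegrableOn (fun y => η y * deriv g y * h y * ρ y) s := by
  obtain ⟨C, hC0, hC⟩ := bound6 (c := c) (d := d) hρ hη hg
  have hM0 : 0 ≤ max M 0 := le_max_right _ _
  refine auxInt hs ((Metric.isBounded_Icc c d).subset hsub) ?_ (C := C * C * max M 0 * C) ?_
  · exact ((hη.continuous.continuousOn.mul
      (hg.continuous_deriv (by simp)).continuousOn).mul hhc).mul hρ.continuous.continuousOn
  · intro y hy
    obtain ⟨e1, e2, e3, e4, e5, e6⟩ := hC y (hsub hy)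
    have hh : |h y| ≤ max M 0 := (hM y hy).trans (le_max_left _ _)
    calc |η y * deriv g y * h y * ρ y| = |η y| * |deriv g y| * |h y| * |ρ y| := by
          rw [abs_mul, abs_mul, abs_mul]
      _ ≤ C * C * max M 0 * C := by gcongr <;> positivity

lemma intf2 {ρ η g : ℝ → ℝ} (hρ : ContDiff ℝ 1 ρ) (hη : ContDiff ℝ (⊤ : ℕ∞) η) (hg : ContDiff ℝ (⊤ : ℕ∞) g)
    {c d : ℝ} {h h' : ℝ → ℝ} {M : ℝ} {s : Set ℝ} (hs : IsOpen s) (hsub : s ⊆ Set.Icc c d)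
    (hhc : ContinuousOn h s) (hh'c : ContinuousOn h' s)
    (hM : ∀ y ∈ s, |h y| ≤ M ∧ |h' y| ≤ M) :
    IntegrableOn (fun y =>
      (deriv η y * h y * ρ y + η y * h' y * ρ y + η y * h y * deriv ρ y) * g y) s := by
  obtain ⟨C, hC0, hC⟩ := bound6 (c := c) (d := d) hρ hη hg
  refine auxInt hs ((Metric.isBounded_Icc c d).subset hsub) ?_
    (C := (C * max M 0 * C + C * max M 0 * C + C * max M 0 * C) * C) ?_
  · exact ((((hη.continuous_deriv (by simp)).continuousOn.mul hhc).mul hρ.continuous.continuousOn).add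
      (((hη.continuous.continuousOn.mul hh'c).mul hρ.continuous.continuousOn).add
        ((hη.continuous.continuousOn.mul hhc).mul
          (hρ.continuous_deriv le_rfl).continuousOn))).mul hg.continuous.continuousOn
      |>.congr (fun y _ => by simp only [Pi.mul_apply, Pi.add_apply]; ring)
  · intro y hy
    obtain ⟨e1, e2, e3, e4, e5, e6⟩ := hC y (hsub hy)
    have hh : |h y| ≤ max M 0 := (hM y hy).1.trans (le_max_left _ _)
    have hh' : |h' y| ≤ max M 0 := (hM y hy).2.trans (le_max_left _ _)
    have hM0 : 0 ≤ max M 0 := le_max_right _ _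
    calc |(deriv η y * h y * ρ y + η y * h' y * ρ y + η y * h y * deriv ρ y) * g y|
        = |deriv η y * h y * ρ y + η y * h' y * ρ y + η y * h y * deriv ρ y| * |g y| := abs_mul _ _
      _ ≤ (|deriv η y * h y * ρ y| + |η y * h' y * ρ y| + |η y * h y * deriv ρ y|) * |g y| := by
          gcongr; exact (abs_add_le _ _).trans (by gcongr; exact abs_add_le _ _)
      _ = (|deriv η y| * |h y| * |ρ y| + |η y| * |h' y| * |ρ y| + |η y| * |h y| * |deriv ρ y|)
            * |g y| := by rw [abs_mul, abs_mul, abs_mul, abs_mul, abs_mul, abs_mul]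
      _ ≤ (C * max M 0 * C + C * max M 0 * C + C * max M 0 * C) * C := by gcongr <;> positivity

lemma intfsum {ρ η g : ℝ → ℝ} (hρ : ContDiff ℝ 1 ρ) (hη : ContDiff ℝ (⊤ : ℕ∞) η) (hg : ContDiff ℝ (⊤ : ℕ∞) g)
    {c d : ℝ} {h h' : ℝ → ℝ} {M : ℝ} {s : Set ℝ} (hs : IsOpen s) (hsub : s ⊆ Set.Icc c d)
    (hhc : ContinuousOn h s) (hh'c : ContinuousOn h' s)
    (hM : ∀ y ∈ s, |h y| ≤ M ∧ |h' y| ≤ M) :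
    IntegrableOn (fun y => η y * deriv g y * h y * ρ y +
      (deriv η y * h y * ρ y + η y * h' y * ρ y + η y * h y * deriv ρ y) * g y) s :=
  (intf1 hρ hη hg hs hsub hhc (fun y hy => (hM y hy).1)).add
    (intf2 hρ hη hg hs hsub hhc hh'c hM)

lemma core2 {ρ η g : ℝ → ℝ} (hρ : ContDiff ℝ 1 ρ) (hη : ContDiff ℝ (⊤ : ℕ∞) η) (hg : ContDiff ℝ (⊤ : ℕ∞) g)
    {c d : ℝ} (hcd : c < d) {h h' : ℝ → ℝ} {M : ℝ}
    (hdiff : ∀ y ∈ Set.Ioo c d, HasDerivAt h (h' y) y)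
    (hcont : ContinuousOn h' (Set.Ioo c d))
    (hM : ∀ y ∈ Set.Ioo c d, |h y| ≤ M ∧ |h' y| ≤ M)
    {La Lb : ℝ} (ha : Tendsto h (𝓝[>] c) (𝓝 La)) (hb : Tendsto h (𝓝[<] d) (𝓝 Lb)) :
    ∫ y in Set.Ioo c d, (η y * deriv g y * h y * ρ y +
        (deriv η y * h y * ρ y + η y * h' y * ρ y + η y * h y * deriv ρ y) * g y)
      = η d * g d * ρ d * Lb - η c * g c * ρ c * La := by
  set f : ℝ → ℝ := fun y => η y * deriv g y * h y * ρ y +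
    (deriv η y * h y * ρ y + η y * h' y * ρ y + η y * h y * deriv ρ y) * g y with hf
  have hhc : ContinuousOn h (Set.Ioo c d) :=
    fun y hy => (hdiff y hy).continuousAt.continuousWithinAt
  have hint : IntegrableOn f (Set.Ioo c d) :=
    intfsum hρ hη hg isOpen_Ioo Set.Ioo_subset_Icc_self hhc hcont hM
  have hFtendsto_c : Tendsto (fun y => η y * g y * (h y * ρ y)) (𝓝[>] c)
      (𝓝 (η c * g c * (La * ρ c))) :=
    (((hη.continuous.mul hg.continuous).tendsto c).mono_left nhdsWithin_le_nhds).mul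
      (ha.mul ((hρ.continuous.tendsto c).mono_left nhdsWithin_le_nhds))
  have hFtendsto_d : Tendsto (fun y => η y * g y * (h y * ρ y)) (𝓝[<] d)
      (𝓝 (η d * g d * (Lb * ρ d))) :=
    (((hη.continuous.mul hg.continuous).tendsto d).mono_left nhdsWithin_le_nhds).mul
      (hb.mul ((hρ.continuous.tendsto d).mono_left nhdsWithin_le_nhds))
  have hFderiv : ∀ y ∈ Set.Ioo c d, HasDerivAt (fun y => η y * g y * (h y * ρ y)) (f y) y := by
    intro y hy
    have h1 : HasDerivAt η (deriv η y) y := (hη.differentiable (by simp)).differentiableAt.hasDerivAt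
    have h2 : HasDerivAt g (deriv g y) y := (hg.differentiable (by simp)).differentiableAt.hasDerivAt
    have h3 : HasDerivAt ρ (deriv ρ y) y := (hρ.differentiable one_ne_zero).differentiableAt.hasDerivAt
    have : HasDerivAt (fun y => η y * g y * (h y * ρ y)) _ y := (h1.mul h2).mul ((hdiff y hy).mul h3)
    convert this using 1
    simp only [hf, Pi.mul_apply]; ring
  have hii : IntervalIntegrable f volume c d := by
    rw [intervalIntegrable_iff_integrableOn_Ioo_of_le hcd.le]; exact hint
  have key := intervalIntegral.integral_eq_sub_of_hasDerivAt_of_tendsto hcd hFderiv hii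
    hFtendsto_c hFtendsto_d
  rw [intervalIntegral.integral_of_le hcd.le, integral_Ioc_eq_integral_Ioo] at key
  rw [key]; ring

lemma gen {ρ η g : ℝ → ℝ} (hρ : ContDiff ℝ 1 ρ) (hη : ContDiff ℝ (⊤ : ℕ∞) η) (hg : ContDiff ℝ (⊤ : ℕ∞) g)
    (m : ℕ) : ∀ (c d : ℝ), c < d → ∀ (x : Fin m → ℝ), StrictMono x →
    (∀ i, x i ∈ Set.Ioo c d) → ∀ (h h' : ℝ → ℝ) (M : ℝ),
    (∀ y ∈ Set.Ioo c d \ Set.range x, HasDerivAt h (h' y) y) →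
    ContinuousOn h' (Set.Ioo c d \ Set.range x) →
    (∀ y ∈ Set.Ioo c d \ Set.range x, |h y| ≤ M ∧ |h' y| ≤ M) →
    ∀ (hl hr : Fin m → ℝ) (La Lb : ℝ),
    (∀ i, Tendsto h (𝓝[<] (x i)) (𝓝 (hl i))) →
    (∀ i, Tendsto h (𝓝[>] (x i)) (𝓝 (hr i))) →
    Tendsto h (𝓝[>] c) (𝓝 La) → Tendsto h (𝓝[<] d) (𝓝 Lb) →
    ∫ y in Set.Ioo c d \ Set.range x, (η y * deriv g y * h y * ρ y +
        (deriv η y * h y * ρ y + η y * h' y * ρ y + η y * h y * deriv ρ y) * g y)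
      = η d * g d * ρ d * Lb - η c * g c * ρ c * La
        + ∑ i, η (x i) * g (x i) * ρ (x i) * (hl i - hr i) := by
  induction m with
  | zero =>
    intro c d hcd x hxm hxcd h h' M hdiff hcont hM hl hr La Lb hliml hlimr ha hb
    have hx : Set.range x = ∅ := Set.range_eq_empty x
    rw [hx, Set.diff_empty]
    simp only [Finset.univ_eq_empty, Finset.sum_empty, add_zero]
    rw [hx, Set.diff_empty] at hdiff hcont hM
    exact core2 hρ hη hg hcd hdiff hcont hM ha hb
  | succ n ih =>
    intro c d hcd x hxm hxcd h h' M hdiff hcont hM hl hr La Lb hliml hlimr ha hb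
    set t := x (Fin.last n) with ht
    set x' : Fin n → ℝ := fun i => x i.castSucc with hx'
    have hct : c < t := (hxcd _).1
    have htd : t < d := (hxcd _).2
    have hx'lt : ∀ i : Fin n, x' i < t := fun i => hxm (Fin.castSucc_lt_last i)
    -- subset facts
    have hsub1 : Set.Ioo c t \ Set.range x' ⊆ Set.Ioo c d \ Set.range x := by
      rintro y ⟨⟨hy1, hy2⟩, hy3⟩
      refine ⟨⟨hy1, hy2.trans htd⟩, ?_⟩
      rintro ⟨j, rfl⟩
      rcases Fin.eq_castSucc_or_eq_last j with ⟨j', rfl⟩ | rfl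
      · exact hy3 ⟨j', rfl⟩
      · exact lt_irrefl _ hy2
    have hsub2 : Set.Ioo t d ⊆ Set.Ioo c d \ Set.range x := by
      rintro y ⟨hy1, hy2⟩
      refine ⟨⟨hct.trans hy1, hy2⟩, ?_⟩
      rintro ⟨j, rfl⟩
      exact absurd (hxm.monotone (Fin.le_last j)) (not_le.mpr hy1)
    have hset : Set.Ioo c d \ Set.range x = (Set.Ioo c t \ Set.range x') ∪ Set.Ioo t d := by
      apply Set.Subset.antisymm
      · rintro y ⟨⟨hy1, hy2⟩, hy3⟩
        rcases lt_trichotomy y t with hlt | rfl | hgt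
        · exact Or.inl ⟨⟨hy1, hlt⟩, fun ⟨j, hj⟩ => hy3 ⟨j.castSucc, hj⟩⟩
        · exact absurd ⟨Fin.last n, rfl⟩ hy3
        · exact Or.inr ⟨hgt, hy2⟩
      · rintro y (hy | hy)
        · exact hsub1 hy
        · exact hsub2 hy
    -- continuity of h on the big set
    have hhc : ContinuousOn h (Set.Ioo c d \ Set.range x) :=
      fun y hy => (hdiff y hy).continuousAt.continuousWithinAt
    have hbig : Set.Ioo c d \ Set.range x ⊆ Set.Icc c d :=
      Set.Subset.trans Set.diff_subset Set.Ioo_subset_Icc_self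
    -- integrability on both pieces
    have hint1 : IntegrableOn (fun y => η y * deriv g y * h y * ρ y +
        (deriv η y * h y * ρ y + η y * h' y * ρ y + η y * h y * deriv ρ y) * g y)
        (Set.Ioo c t \ Set.range x') := by
      refine intfsum hρ hη hg (c := c) (d := d)
        (isOpen_Ioo.sdiff ((Set.finite_range x').isClosed)) (hsub1.trans hbig)
        (hhc.mono hsub1) (hcont.mono hsub1) (fun y hy => hM y (hsub1 hy))
    have hint2 : IntegrableOn (fun y => η y * deriv g y * h y * ρ y +
        (deriv η y * h y * ρ y + η y * h' y * ρ y + η y * h y * deriv ρ y) * g y)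
        (Set.Ioo t d) := by
      refine intfsum hρ hη hg (c := c) (d := d) isOpen_Ioo (hsub2.trans hbig)
        (hhc.mono hsub2) (hcont.mono hsub2) (fun y hy => hM y (hsub2 hy))
    have hdisj : Disjoint (Set.Ioo c t \ Set.range x') (Set.Ioo t d) := by
      rw [Set.disjoint_left]
      rintro y ⟨⟨_, hy2⟩, _⟩ ⟨hy3, _⟩
      exact lt_irrefl y (hy2.trans hy3)
    rw [hset, setIntegral_union hdisj measurableSet_Ioo hint1 hint2]
    -- IH on (c, t)
    have ihresult := ih c t hct x' (fun i j hij => hxm (by simpa using hij))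
      (fun i => ⟨(hxcd i.castSucc).1, hx'lt i⟩) h h' M
      (fun y hy => hdiff y (hsub1 hy)) (hcont.mono hsub1) (fun y hy => hM y (hsub1 hy))
      (fun i => hl i.castSucc) (fun i => hr i.castSucc) La (hl (Fin.last n))
      (fun i => hliml i.castSucc) (fun i => hlimr i.castSucc) ha (hliml (Fin.last n))
    -- core2 on (t, d)
    have hcore := core2 hρ hη hg htd (fun y hy => hdiff y (hsub2 hy)) (hcont.mono hsub2)
      (fun y hy => hM y (hsub2 hy)) (hlimr (Fin.last n)) hb
    rw [ihresult, hcore, Fin.sum_univ_castSucc]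
    simp only [hx']
    ring

/-- Integration by parts with boundary terms at the finitely many points
`x₁ < ⋯ < x_m` of `A ⊆ (a,b)`:
`∫_{(a,b)\A} η g' h ρ dλ = −∫_{(a,b)\A} (η h ρ)' g dλ
  + Σᵢ η(xᵢ) g(xᵢ) ρ(xᵢ) (h_l(xᵢ) − h_r(xᵢ))`. -/
theorem stmt3 (a b : ℝ) (hab : a < b) (m : ℕ) (x : Fin m → ℝ)
    (hmono : StrictMono x) (hxab : ∀ i, x i ∈ Set.Ioo a b)
    (A : Set ℝ) (hA : A = Set.range x)
    (ρ : ℝ → ℝ) (hρ : ContDiff ℝ 1 ρ) (hρpos : ∀ y, 0 < ρ y)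
    (h h' : ℝ → ℝ) (M : ℝ)
    (hdiff : ∀ y ∉ A, HasDerivAt h (h' y) y)
    (hcont : ContinuousOn h' Aᶜ)
    (hd_bd : ∀ y ∉ A, |h' y| ≤ M) (hbd : ∀ y ∉ A, |h y| ≤ M)
    (hl hr : Fin m → ℝ)
    (hlim_l : ∀ i, Tendsto h (𝓝[<] (x i)) (𝓝 (hl i)))
    (hlim_r : ∀ i, Tendsto h (𝓝[>] (x i)) (𝓝 (hr i)))
    (η : ℝ → ℝ) (hη : ContDiff ℝ (⊤ : ℕ∞) η) (hηsupp : tsupport η ⊆ Set.Ioo a b)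
    (g : ℝ → ℝ) (hg : ContDiff ℝ (⊤ : ℕ∞) g) (hgsupp : HasCompactSupport g) :
    ∫ y in Set.Ioo a b \ A, η y * deriv g y * h y * ρ y
      = -(∫ y in Set.Ioo a b \ A, deriv (fun t => η t * h t * ρ t) y * g y)
        + ∑ i, η (x i) * g (x i) * ρ (x i) * (hl i - hr i) := by
  subst hA
  set s : Set ℝ := Set.Ioo a b \ Set.range x with hs
  have hsopen : IsOpen s := isOpen_Ioo.sdiff (Set.finite_range x).isClosed
  have hsmem : ∀ y ∈ s, y ∉ Set.range x := fun y hy => hy.2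
  have hsub : s ⊆ Set.Icc a b := Set.Subset.trans Set.diff_subset Set.Ioo_subset_Icc_self
  have hhc : ContinuousOn h s := fun y hy => (hdiff y hy.2).continuousAt.continuousWithinAt
  have hh'c : ContinuousOn h' s := hcont.mono (fun y hy => hy.2)
  -- endpoints not in range x
  have hanr : a ∉ Set.range x := by rintro ⟨i, hi⟩; exact lt_irrefl a (hi ▸ (hxab i).1)
  have hbnr : b ∉ Set.range x := by rintro ⟨i, hi⟩; exact lt_irrefl b (hi ▸ (hxab i).2)
  have hLa : Tendsto h (𝓝[>] a) (𝓝 (h a)) :=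
    ((hdiff a hanr).continuousAt.tendsto).mono_left nhdsWithin_le_nhds
  have hLb : Tendsto h (𝓝[<] b) (𝓝 (h b)) :=
    ((hdiff b hbnr).continuousAt.tendsto).mono_left nhdsWithin_le_nhds
  have hηa : η a = 0 := by
    apply image_eq_zero_of_notMem_tsupport
    intro hmem; exact lt_irrefl a (hηsupp hmem).1
  have hηb : η b = 0 := by
    apply image_eq_zero_of_notMem_tsupport
    intro hmem; exact lt_irrefl b (hηsupp hmem).2
  have key := gen hρ hη hg m a b hab x hmono hxab h h' M
    (fun y hy => hdiff y hy.2) (hcont.mono (fun y hy => hy.2))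
    (fun y hy => ⟨hbd y hy.2, hd_bd y hy.2⟩) hl hr (h a) (h b) hlim_l hlim_r hLa hLb
  rw [hηa, hηb] at key
  simp only [zero_mul, sub_zero, zero_add] at key
  have hint1 : IntegrableOn (fun y => η y * deriv g y * h y * ρ y) s :=
    intf1 hρ hη hg (c := a) (d := b) hsopen hsub hhc (fun y hy => hbd y hy.2)
  have hint2 : IntegrableOn (fun y =>
      (deriv η y * h y * ρ y + η y * h' y * ρ y + η y * h y * deriv ρ y) * g y) s :=
    intf2 hρ hη hg (c := a) (d := b) hsopen hsub hhc hh'c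
      (fun y hy => ⟨hbd y hy.2, hd_bd y hy.2⟩)
  rw [integral_add hint1 hint2] at key
  have hderiv_eq : Set.EqOn (fun y => deriv (fun t => η t * h t * ρ t) y * g y)
      (fun y => (deriv η y * h y * ρ y + η y * h' y * ρ y + η y * h y * deriv ρ y) * g y) s := by
    intro y hy
    have h1 : HasDerivAt η (deriv η y) y := (hη.differentiable (by simp)).differentiableAt.hasDerivAt
    have h3 : HasDerivAt ρ (deriv ρ y) y := (hρ.differentiable one_ne_zero).differentiableAt.hasDerivAt
    have hd : HasDerivAt (fun t => η t * h t * ρ t)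
        (deriv η y * h y * ρ y + η y * h' y * ρ y + η y * h y * deriv ρ y) y := by
      have : HasDerivAt (fun t => η t * h t * ρ t) _ y := (h1.mul (hdiff y hy.2)).mul h3
      convert this using 1; simp only [Pi.mul_apply]; ring
    simp only [hd.deriv]
  rw [setIntegral_congr_fun hsopen.measurableSet hderiv_eq]
  linarith [key]
end

section
/- Let A ⊆ ℝ be a closed locally finite set, ρ : ℝ → ℝ continuously differentiable and strictly positive, 𝒮 = Σ_{x∈A} δ_x, μ = λ + 𝒮, and f ∈ C⁰_c(ℝ) twice continuously differentiable on ℝ\A with bounded first and second derivatives. Define L^ρ f(x) = 𝟙_{ℝ\A}(x)(f''(x) + f'(x)(ln ρ)'(x)) + 𝟙_A(x)(f'_r(x) − f'_l(x)), where f'_r, f'_l are the right/left limits of f' at points of A. Then for every g ∈ C_c^∞(ℝ): ∫_{ℝ\A} f' g' ρ dλ = −∫_ℝ (L^ρ f) g ρ dμ. -/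
open MeasureTheory Filter Topology

section Helpers

lemma meas_indicator_of_countable {s : Set ℝ} (hs : s.Countable) (f : ℝ → ℝ) :
    Measurable (s.indicator f) := by
  intro t ht
  classical
  by_cases h0 : (0:ℝ) ∈ t
  · have : s.indicator f ⁻¹' t = {a ∈ s | f a ∈ t} ∪ sᶜ := by
      ext a; by_cases ha : a ∈ s <;> simp [Set.indicator_of_mem, Set.indicator_of_notMem, ha, h0]
    rw [this]
    exact ((hs.mono (Set.sep_subset _ _)).measurableSet).union hs.measurableSet.compl
  · have : s.indicator f ⁻¹' t = {a ∈ s | f a ∈ t} := by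
      ext a; by_cases ha : a ∈ s <;> simp [Set.indicator_of_mem, Set.indicator_of_notMem, ha, h0]
    rw [this]
    exact (hs.mono (Set.sep_subset _ _)).measurableSet

lemma finite_inter_compact {A : Set ℝ}
    (hloc : ∀ z : ℝ, ∃ ε > 0, (Metric.ball z ε ∩ A).Finite)
    {K : Set ℝ} (hK : IsCompact K) : (A ∩ K).Finite := by
  classical
  choose ε hε hfin using hloc
  obtain ⟨t, ht⟩ := hK.elim_finite_subcover (fun z : ℝ => Metric.ball z (ε z))
    (fun z => Metric.isOpen_ball) (fun z hz => Set.mem_iUnion.2 ⟨z, Metric.mem_ball_self (hε z)⟩)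
  have : A ∩ K ⊆ ⋃ z ∈ t, (Metric.ball z (ε z) ∩ A) := by
    rintro a ⟨haA, haK⟩
    obtain ⟨z, hzt, hz⟩ := Set.mem_iUnion₂.1 (ht haK)
    exact Set.mem_iUnion₂.2 ⟨z, hzt, hz, haA⟩
  exact Set.Finite.subset (t.finite_toSet.biUnion fun z _ => hfin z) this

open Set in
lemma ftc_Ioo {φ ψ : ℝ → ℝ} {p q Fp Fq : ℝ} (hpq : p < q)
    (hφ : ∀ t ∈ Set.Ioo p q, HasDerivAt φ (ψ t) t)
    (hFp : Tendsto φ (𝓝[>] p) (𝓝 Fp)) (hFq : Tendsto φ (𝓝[<] q) (𝓝 Fq))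
    (hint : IntegrableOn ψ (Set.Ioo p q)) :
    ∫ t in Set.Ioo p q, ψ t = Fq - Fp := by
  classical
  set Φ : ℝ → ℝ := fun t => if t ≤ p then Fp else if q ≤ t then Fq else φ t with hΦ
  have hmemIoo : Ioo p q ∈ 𝓝[>] p := by
    apply Ioo_mem_nhdsGT_of_mem; exact ⟨le_rfl, hpq⟩
  have hmemIoo' : Ioo p q ∈ 𝓝[<] q := by
    apply Ioo_mem_nhdsLT_of_mem; exact ⟨hpq, le_rfl⟩
  have heq : ∀ t ∈ Ioo p q, Φ t = φ t := by
    intro t ht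
    simp only [hΦ, if_neg (not_le.2 ht.1), if_neg (not_le.2 ht.2)]
  have hΦp : Φ p = Fp := by simp [hΦ]
  have hΦq : Φ q = Fq := by simp [hΦ, not_le.2 hpq, le_refl]
  have hcont : ContinuousOn Φ (Icc p q) := by
    intro t ht
    rcases eq_or_lt_of_le ht.1 with h1 | h1
    · subst h1
      rw [ContinuousWithinAt, hΦp]
      have h1 : Tendsto Φ (𝓝[>] p) (𝓝 Fp) :=
        hFp.congr' (by filter_upwards [hmemIoo] with s hs using (heq s hs).symm)
      have h2 : Tendsto Φ (𝓝[insert p (Ioi p)] p) (𝓝 Fp) := by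
        rw [nhdsWithin_insert]
        exact tendsto_sup.2 ⟨by simpa [hΦp] using tendsto_pure_nhds Φ p, h1⟩
      exact h2.mono_left (nhdsWithin_mono _ (fun s hs => by
        rcases eq_or_lt_of_le hs.1 with rfl | h; · exact Set.mem_insert _ _
        · exact Set.mem_insert_of_mem _ h))
    rcases eq_or_lt_of_le ht.2 with h2 | h2
    · subst h2
      rw [ContinuousWithinAt, hΦq]
      have h1' : Tendsto Φ (𝓝[<] t) (𝓝 Fq) :=
        hFq.congr' (by filter_upwards [hmemIoo'] with s hs using (heq s hs).symm)
      have h2' : Tendsto Φ (𝓝[insert t (Iio t)] t) (𝓝 Fq) := by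
        rw [nhdsWithin_insert]
        exact tendsto_sup.2 ⟨by simpa [hΦq] using tendsto_pure_nhds Φ t, h1'⟩
      exact h2'.mono_left (nhdsWithin_mono _ (fun s hs => by
        rcases eq_or_lt_of_le hs.2 with rfl | h; · exact Set.mem_insert _ _
        · exact Set.mem_insert_of_mem _ h))
    · have : Φ =ᶠ[𝓝 t] φ := by
        filter_upwards [Ioo_mem_nhds h1 h2] with s hs using heq s hs
      have : ContinuousAt Φ t :=
        ((hφ t ⟨h1, h2⟩).continuousAt.congr this.symm)
      exact this.continuousWithinAt
  have hderiv : ∀ t ∈ Ioo p q, HasDerivWithinAt Φ (ψ t) (Ioi t) t := by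
    intro t ht
    have : Φ =ᶠ[𝓝 t] φ := by
      filter_upwards [Ioo_mem_nhds ht.1 ht.2] with s hs using heq s hs
    exact ((hφ t ht).congr_of_eventuallyEq this).hasDerivWithinAt
  have hII : IntervalIntegrable ψ volume p q := by
    rw [intervalIntegrable_iff_integrableOn_Ioo_of_le hpq.le]
    exact hint
  have := intervalIntegral.integral_eq_sub_of_hasDeriv_right_of_le hpq.le hcont hderiv hII
  rw [intervalIntegral.integral_of_le hpq.le, MeasureTheory.integral_Ioc_eq_integral_Ioo] at this
  rw [this, hΦp, hΦq]

open Set in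
lemma key_ind (A : Set ℝ) (hAm : MeasurableSet A) (φ ψ Fr Fl : ℝ → ℝ)
    (hd : ∀ t ∉ A, HasDerivAt φ (ψ t) t)
    (hr : ∀ t, Tendsto φ (𝓝[>] t) (𝓝 (Fr t)))
    (hl : ∀ t, Tendsto φ (𝓝[<] t) (𝓝 (Fl t)))
    (hint : ∀ p q : ℝ, IntegrableOn ψ (Set.Ioo p q)) :
    ∀ (n : ℕ) (p q : ℝ), p < q → (A ∩ Set.Ioo p q).Finite → (A ∩ Set.Ioo p q).ncard = n →
      ∫ t in Set.Ioo p q \ A, ψ t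
        = Fl q - Fr p - ∑ᶠ a ∈ A ∩ Set.Ioo p q, (Fr a - Fl a) := by
  intro n
  induction n using Nat.strong_induction_on with
  | _ n IH =>
    intro p q hpq hfin hcard
    rcases Nat.eq_zero_or_pos n with rfl | hn
    · have hempty : A ∩ Ioo p q = ∅ := (Set.ncard_eq_zero hfin).mp hcard
      have hdiff : Ioo p q \ A = Ioo p q := by
        rw [sdiff_eq_self_iff_disjoint, Set.disjoint_left]
        intro t htA htI
        exact absurd (Set.mem_inter htA htI) (by simp [hempty])
      have hnA : ∀ t ∈ Ioo p q, t ∉ A := by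
        intro t ht hta
        exact absurd (Set.mem_inter hta ht) (by simp [hempty])
      rw [hdiff, hempty, finsum_mem_empty, sub_zero]
      exact ftc_Ioo hpq (fun t ht => hd t (hnA t ht)) (hr p) (hl q) (hint p q)
    · obtain ⟨a, haA, hapq⟩ : (A ∩ Ioo p q).Nonempty :=
        Set.nonempty_of_ncard_ne_zero (by omega)
      set s₁ := A ∩ Ioo p a with hs₁
      set s₂ := A ∩ Ioo a q with hs₂
      have hsub1 : s₁ ⊆ A ∩ Ioo p q := fun t ht =>
        ⟨ht.1, ht.2.1, ht.2.2.trans hapq.2⟩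
      have hsub2 : s₂ ⊆ A ∩ Ioo p q := fun t ht =>
        ⟨ht.1, hapq.1.trans ht.2.1, ht.2.2⟩
      have hfin1 : s₁.Finite := hfin.subset hsub1
      have hfin2 : s₂.Finite := hfin.subset hsub2
      have hdecomp : A ∩ Ioo p q = (s₁ ∪ {a}) ∪ s₂ := by
        ext t
        constructor
        · rintro ⟨htA, ht1, ht2⟩
          rcases lt_trichotomy t a with h | h | h
          · exact Or.inl (Or.inl ⟨htA, ht1, h⟩)
          · exact Or.inl (Or.inr (by simp [h]))
          · exact Or.inr ⟨htA, h, ht2⟩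
        · rintro ((ht | ht) | ht)
          · exact hsub1 ht
          · rcases ht with rfl; exact ⟨haA, hapq⟩
          · exact hsub2 ht
      have hdisj12 : Disjoint s₁ {a} := by
        rw [Set.disjoint_singleton_right]
        rintro ⟨-, -, h⟩; exact lt_irrefl a h
      have hdisj3 : Disjoint (s₁ ∪ {a}) s₂ := by
        rw [Set.disjoint_union_left]
        constructor
        · rw [Set.disjoint_left]; rintro t ⟨-, -, h1⟩ ⟨-, h2, -⟩; exact lt_irrefl t (h1.trans h2)
        · rw [Set.disjoint_singleton_left]; rintro ⟨-, h, -⟩; exact lt_irrefl a h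
      have hcard' : s₁.ncard + 1 + s₂.ncard = n := by
        rw [← hcard, hdecomp, Set.ncard_union_eq hdisj3 (hfin1.union (Set.finite_singleton a)) hfin2,
          Set.ncard_union_eq hdisj12 hfin1 (Set.finite_singleton a), Set.ncard_singleton]
      have h1 := IH s₁.ncard (by omega) p a hapq.1 hfin1 rfl
      have h2 := IH s₂.ncard (by omega) a q hapq.2 hfin2 rfl
      have hsplit : Ioo p q \ A = (Ioo p a \ A) ∪ (Ioo a q \ A) := by
        ext t
        constructor
        · rintro ⟨⟨ht1, ht2⟩, htA⟩
          rcases lt_trichotomy t a with h | h | h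
          · exact Or.inl ⟨⟨ht1, h⟩, htA⟩
          · exact absurd haA (h ▸ htA)
          · exact Or.inr ⟨⟨h, ht2⟩, htA⟩
        · rintro (⟨⟨ht1, ht2⟩, htA⟩ | ⟨⟨ht1, ht2⟩, htA⟩)
          · exact ⟨⟨ht1, ht2.trans hapq.2⟩, htA⟩
          · exact ⟨⟨hapq.1.trans ht1, ht2⟩, htA⟩
      have hdisjI : Disjoint (Ioo p a \ A) (Ioo a q \ A) := by
        rw [Set.disjoint_left]
        rintro t ⟨⟨-, h1⟩, -⟩ ⟨⟨h2, -⟩, -⟩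
        exact lt_irrefl t (h1.trans h2)
      rw [hsplit, MeasureTheory.setIntegral_union hdisjI
        (measurableSet_Ioo.diff hAm)
        ((hint p a).mono_set Set.diff_subset) ((hint a q).mono_set Set.diff_subset),
        h1, h2, hdecomp,
        finsum_mem_union hdisj3 (hfin1.union (Set.finite_singleton a)) hfin2,
        finsum_mem_union hdisj12 hfin1 (Set.finite_singleton a),
        finsum_mem_singleton]
      ring

end Helpers

/-- Generator identity in one dimension: with `A = {xₙ}` closed and locally
finite, `𝒮 = Σₙ δ_{xₙ}`, `μ = λ + 𝒮`, `ρ ∈ C¹` positive, and `f` continuous with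
compact support, twice continuously differentiable off `A` with bounded first and
second derivatives, the function
`L^ρ f = 𝟙_{ℝ∖A}(f'' + f'(ln ρ)') + 𝟙_A(f'_r − f'_l)` satisfies
`∫_{ℝ∖A} f' g' ρ dλ = −∫ (L^ρ f) g ρ dμ` for all `g ∈ C_c^∞(ℝ)`. -/
theorem stmt18 (x : ℕ → ℝ) (hinj : Function.Injective x)
    (A : Set ℝ) (hA : A = Set.range x) (hAclosed : IsClosed A)
    (hloc : ∀ z : ℝ, ∃ ε > 0, (Metric.ball z ε ∩ A).Finite)
    (S : Measure ℝ) (hS : S = Measure.sum fun n => Measure.dirac (x n))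
    (μ : Measure ℝ) (hμ : μ = volume + S)
    (ρ : ℝ → ℝ) (hρ : ContDiff ℝ 1 ρ) (hρpos : ∀ y, 0 < ρ y)
    (f : ℝ → ℝ) (hfc : Continuous f) (hfsupp : HasCompactSupport f)
    (hfd : ∀ y ∉ A, DifferentiableAt ℝ f y ∧ DifferentiableAt ℝ (deriv f) y)
    (hfd_cont : ContinuousOn (deriv f) Aᶜ ∧ ContinuousOn (deriv (deriv f)) Aᶜ)
    (M : ℝ) (hbd : ∀ y ∉ A, |deriv f y| ≤ M ∧ |deriv (deriv f) y| ≤ M)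
    (fr fl : ℝ → ℝ)
    (hfr : ∀ y ∈ A, Tendsto (deriv f) (𝓝[>] y) (𝓝 (fr y)))
    (hfl : ∀ y ∈ A, Tendsto (deriv f) (𝓝[<] y) (𝓝 (fl y)))
    (Lf : ℝ → ℝ)
    (hLf : Lf = fun y => Aᶜ.indicator
        (fun t => deriv (deriv f) t + deriv f t * deriv (fun s => Real.log (ρ s)) t) y
      + A.indicator (fun t => fr t - fl t) y) :
    ∀ g : ℝ → ℝ, ContDiff ℝ (⊤ : ℕ∞) g → HasCompactSupport g →
      ∫ y in Aᶜ, deriv f y * deriv g y * ρ y ∂volume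
        = -∫ y, Lf y * g y * ρ y ∂μ := by
  intro g hg hgsupp
  classical
  -- basic continuity/differentiability facts
  have hρd : Differentiable ℝ ρ := hρ.differentiable one_ne_zero
  have hρc : Continuous ρ := hρ.continuous
  have hρ'c : Continuous (deriv ρ) := hρ.continuous_deriv le_rfl
  have hgd : Differentiable ℝ g := hg.differentiable (by simp)
  have hgc : Continuous g := hg.continuous
  have hg'c : Continuous (deriv g) := hg.continuous_deriv (by simp)
  have hAm : MeasurableSet A := hAclosed.measurableSet
  have hAc : A.Countable := by rw [hA]; exact Set.countable_range x
  have hA0 : volume A = 0 := hAc.measure_zero _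
  have hae : ∀ᵐ t : ℝ, t ∉ A := by
    rw [MeasureTheory.ae_iff]; simpa [not_not] using hA0
  have hAo : IsOpen Aᶜ := hAclosed.isOpen_compl
  -- log derivative
  have hlρ : ∀ t, deriv (fun s => Real.log (ρ s)) t = deriv ρ t / ρ t := by
    intro t
    exact (((hρd t).hasDerivAt.log (hρpos t).ne')).deriv
  have hlρc : Continuous (deriv (fun s => Real.log (ρ s))) := by
    have : (deriv (fun s => Real.log (ρ s))) = fun t => deriv ρ t / ρ t := funext hlρ
    rw [this]
    exact hρ'c.div hρc (fun t => (hρpos t).ne')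
  -- vanishing of g and g' outside the support
  have hg0 : ∀ t ∉ tsupport g, g t = 0 := fun t ht => image_eq_zero_of_notMem_tsupport ht
  have hg'0 : ∀ t ∉ tsupport g, deriv g t = 0 := by
    intro t ht
    have : t ∉ Function.support (deriv g) := fun hs => ht (support_deriv_subset hs)
    simpa [Function.mem_support, not_not] using this
  -- integrability machine
  have main_int : ∀ (u B : ℝ → ℝ), Measurable u → Continuous B →
      (Function.support B ⊆ tsupport g) → (∀ t ∉ A, |u t| ≤ B t) → Integrable u volume := by
    intro u B hu hB hsupp hbound
    refine (hB.integrable_of_hasCompactSupport (hgsupp.mono' ?_)).mono'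
      hu.aestronglyMeasurable ?_
    · exact hsupp
    · filter_upwards [hae] with t ht
      simpa [Real.norm_eq_abs] using hbound t ht
  -- the main players
  set I₁ : ℝ → ℝ := fun t => deriv f t * deriv g t * ρ t with hI₁def
  set I₂ : ℝ → ℝ := fun t => deriv (deriv f) t * (g t * ρ t) + deriv f t * (g t * deriv ρ t)
    with hI₂def
  set φ : ℝ → ℝ := fun t => deriv f t * (g t * ρ t) with hφdef
  set ψ : ℝ → ℝ := fun t => I₁ t + I₂ t with hψdef
  set Fr : ℝ → ℝ := fun t => (if t ∈ A then fr t else deriv f t) * (g t * ρ t) with hFrdef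
  set Fl : ℝ → ℝ := fun t => (if t ∈ A then fl t else deriv f t) * (g t * ρ t) with hFldef
  have hhc : Continuous (fun t => g t * ρ t) := hgc.mul hρc
  have hf'c : ∀ t ∉ A, ContinuousAt (deriv f) t := fun t ht =>
    hfd_cont.1.continuousAt (hAo.mem_nhds ht)
  -- derivative of φ off A
  have hd : ∀ t ∉ A, HasDerivAt φ (ψ t) t := by
    intro t ht
    have h1 : HasDerivAt (deriv f) (deriv (deriv f) t) t := (hfd t ht).2.hasDerivAt
    have h2 : HasDerivAt (fun s => g s * ρ s) (deriv g t * ρ t + g t * deriv ρ t) t :=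
      (hgd t).hasDerivAt.mul (hρd t).hasDerivAt
    have : HasDerivAt φ (deriv (deriv f) t * (g t * ρ t) + deriv f t * (deriv g t * ρ t + g t * deriv ρ t)) t := h1.mul h2
    convert this using 1
    simp only [hψdef, hI₁def, hI₂def]
    ring
  -- one-sided limits of φ everywhere
  have hr : ∀ t, Tendsto φ (𝓝[>] t) (𝓝 (Fr t)) := by
    intro t
    have hh : Tendsto (fun s => g s * ρ s) (𝓝[>] t) (𝓝 (g t * ρ t)) :=
      (hhc.tendsto t).mono_left nhdsWithin_le_nhds
    by_cases htA : t ∈ A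
    · simpa [hφdef, hFrdef, if_pos htA] using (hfr t htA).mul hh
    · simpa [hφdef, hFrdef, if_neg htA] using
        (((hf'c t htA).tendsto).mono_left nhdsWithin_le_nhds).mul hh
  have hl : ∀ t, Tendsto φ (𝓝[<] t) (𝓝 (Fl t)) := by
    intro t
    have hh : Tendsto (fun s => g s * ρ s) (𝓝[<] t) (𝓝 (g t * ρ t)) :=
      (hhc.tendsto t).mono_left nhdsWithin_le_nhds
    by_cases htA : t ∈ A
    · simpa [hφdef, hFldef, if_pos htA] using (hfl t htA).mul hh
    · simpa [hφdef, hFldef, if_neg htA] using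
        (((hf'c t htA).tendsto).mono_left nhdsWithin_le_nhds).mul hh
  -- global integrability of ψ
  have hψmeas : Measurable ψ := by
    apply Measurable.add
    · exact ((measurable_deriv f).mul hg'c.measurable).mul hρc.measurable
    · exact ((measurable_deriv (deriv f)).mul hhc.measurable).add
        ((measurable_deriv f).mul (hgc.mul hρ'c).measurable)
  have hψint : Integrable ψ volume := by
    apply main_int ψ (fun t => M * (|deriv g t * ρ t| + |g t * ρ t| + |g t * deriv ρ t|))
      hψmeas
    · exact continuous_const.mul (((hg'c.mul hρc).abs.add hhc.abs).add
        ((hgc.mul hρ'c).abs))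
    · intro t ht
      simp only [Function.mem_support, ne_eq] at ht
      by_contra htg
      apply ht
      rw [hg0 t htg, hg'0 t htg]
      simp
    · intro t ht
      have h1 := (hbd t ht).1
      have h2 := (hbd t ht).2
      have e1 : |I₁ t| ≤ M * |deriv g t * ρ t| := by
        rw [hI₁def]
        calc |deriv f t * deriv g t * ρ t| = |deriv f t| * |deriv g t * ρ t| := by
              rw [mul_assoc, abs_mul]
          _ ≤ M * |deriv g t * ρ t| := mul_le_mul_of_nonneg_right h1 (abs_nonneg _)
      have e2 : |I₂ t| ≤ M * |g t * ρ t| + M * |g t * deriv ρ t| := by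
        rw [hI₂def]
        refine (abs_add_le _ _).trans (add_le_add ?_ ?_)
        · rw [abs_mul]; exact mul_le_mul_of_nonneg_right h2 (abs_nonneg _)
        · rw [abs_mul]; exact mul_le_mul_of_nonneg_right h1 (abs_nonneg _)
      calc |ψ t| ≤ |I₁ t| + |I₂ t| := abs_add_le _ _
        _ ≤ M * |deriv g t * ρ t| + (M * |g t * ρ t| + M * |g t * deriv ρ t|) :=
            add_le_add e1 e2
        _ = M * (|deriv g t * ρ t| + |g t * ρ t| + |g t * deriv ρ t|) := by ring
  have hint : ∀ p q : ℝ, IntegrableOn ψ (Set.Ioo p q) := fun p q => hψint.integrableOn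
  -- choose R
  obtain ⟨r, hr0⟩ := hgsupp.isBounded.subset_ball 0
  set R : ℝ := |r| + 1 with hRdef
  have hRpos : (0:ℝ) < R := by positivity
  have hsuppR : tsupport g ⊆ Set.Ioo (-R) R := by
    intro t ht
    have := hr0 ht
    rw [Real.ball_eq_Ioo] at this
    constructor
    · calc -R = -(|r| + 1) := rfl
        _ < 0 - r := by cases abs_cases r <;> push_cast <;> linarith [abs_nonneg r]
        _ ≤ t := this.1.le
    · calc t ≤ 0 + r := this.2.le
        _ < |r| + 1 := by cases abs_cases r <;> linarith [abs_nonneg r]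
  have hRR : -R < R := by linarith
  -- finiteness of A points in windows
  have hAfinIoo : (A ∩ Set.Ioo (-R) R).Finite :=
    (finite_inter_compact hloc isCompact_Icc).subset
      (Set.inter_subset_inter_right A Set.Ioo_subset_Icc_self : _ ⊆ A ∩ Set.Icc (-R) R)
  have hAg : (A ∩ tsupport g).Finite := finite_inter_compact hloc hgsupp
  -- the key identity
  have keyres := key_ind A hAm φ ψ Fr Fl hd hr hl hint
    (A ∩ Set.Ioo (-R) R).ncard (-R) R hRR hAfinIoo rfl
  have hgR : g R = 0 := hg0 R (fun h => (lt_irrefl R (hsuppR h).2))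
  have hgmR : g (-R) = 0 := hg0 (-R) (fun h => (lt_irrefl (-R) (hsuppR h).1))
  have hFlR : Fl R = 0 := by simp [hFldef, hgR]
  have hFrmR : Fr (-R) = 0 := by simp [hFrdef, hgmR]
  rw [hFlR, hFrmR] at keyres
  have hsumcongr : ∑ᶠ a ∈ A ∩ Set.Ioo (-R) R, (Fr a - Fl a)
      = ∑ᶠ a ∈ A ∩ Set.Ioo (-R) R, ((fr a - fl a) * (g a * ρ a)) := by
    apply finsum_mem_congr rfl
    intro a ha
    rw [hFrdef, hFldef]
    simp only [if_pos ha.1]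
    ring
  rw [hsumcongr] at keyres
  set SS : ℝ := ∑ᶠ a ∈ A ∩ Set.Ioo (-R) R, ((fr a - fl a) * (g a * ρ a)) with hSSdef
  -- E1 : ∫ over Aᶜ of ψ equals -SS
  have hψ0 : ∀ t ∉ Set.Ioo (-R) R, ψ t = 0 := by
    intro t ht
    have htg : t ∉ tsupport g := fun h => ht (hsuppR h)
    simp [hψdef, hI₁def, hI₂def, hg0 t htg, hg'0 t htg]
  have hsuppψ : Function.support ψ ⊆ Set.Ioo (-R) R := by
    intro t ht
    by_contra h
    exact ht (hψ0 t h)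
  have E1 : ∫ t in Aᶜ, ψ t = -SS := by
    rw [← Set.indicator_eq_self.2 hsuppψ, MeasureTheory.setIntegral_indicator measurableSet_Ioo]
    have : Aᶜ ∩ Set.Ioo (-R) R = Set.Ioo (-R) R \ A := by
      rw [Set.diff_eq, Set.inter_comm]
    rw [this, keyres]
    ring
  -- volume integrability of the RHS integrand
  set w : ℝ → ℝ := fun t => deriv (deriv f) t + deriv f t * deriv (fun s => Real.log (ρ s)) t
    with hwdef
  have hwm : Measurable w :=
    (measurable_deriv _).add ((measurable_deriv f).mul hlρc.measurable)
  set F : ℝ → ℝ := fun y => Lf y * g y * ρ y with hFdef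
  set F₁ : ℝ → ℝ := fun y => Aᶜ.indicator w y * (g y * ρ y) with hF₁def
  have hLfm : Measurable Lf := by
    rw [hLf]
    exact (hwm.indicator hAm.compl).add (meas_indicator_of_countable hAc _)
  have hFm : Measurable F := (hLfm.mul hgc.measurable).mul hρc.measurable
  have hF₁m : Measurable F₁ := (hwm.indicator hAm.compl).mul hhc.measurable
  have hF₁F : F₁ =ᵐ[volume] F := by
    filter_upwards [hae] with t ht
    rw [hF₁def, hFdef, hLf]
    simp only [Set.indicator_of_mem (Set.mem_compl ht), Set.indicator_of_notMem ht, add_zero]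
    ring
  have hF₁int : Integrable F₁ volume := by
    apply main_int F₁ (fun t => (M + M * |deriv (fun s => Real.log (ρ s)) t|) * |g t * ρ t|)
      hF₁m
    · exact (continuous_const.add (continuous_const.mul hlρc.abs)).mul hhc.abs
    · intro t ht
      simp only [Function.mem_support, ne_eq] at ht
      by_contra htg
      exact ht (by rw [hg0 t htg]; simp)
    · intro t ht
      rw [hF₁def]
      simp only [Set.indicator_of_mem (Set.mem_compl ht)]
      rw [abs_mul]
      apply mul_le_mul_of_nonneg_right _ (abs_nonneg _)
      rw [hwdef]
      refine (abs_add_le _ _).trans (add_le_add (hbd t ht).2 ?_)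
      rw [abs_mul]
      exact mul_le_mul_of_nonneg_right (hbd t ht).1 (abs_nonneg _)
  have hFvol : Integrable F volume := hF₁int.congr hF₁F
  -- S-integrability and the value of the S-integral
  set Iset : Set ℕ := x ⁻¹' (tsupport g) with hIdef
  have hIeq : Iset = x ⁻¹' (A ∩ tsupport g) := by
    ext n
    simp only [hIdef, Set.mem_preimage, Set.mem_inter_iff]
    exact ⟨fun h => ⟨hA ▸ Set.mem_range_self n, h⟩, fun h => h.2⟩
  have hIfin : Iset.Finite := by
    rw [hIeq]
    exact hAg.preimage hinj.injOn
  have hFzero : ∀ n ∉ hIfin.toFinset, F (x n) = 0 := by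
    intro n hn
    have : x n ∉ tsupport g := by
      simpa [hIdef, Set.Finite.mem_toFinset] using hn
    rw [hFdef]
    simp [hg0 _ this]
  have hFS : Integrable F S := by
    rw [hS]
    refine ⟨hFm.aestronglyMeasurable, ?_⟩
    rw [HasFiniteIntegral, lintegral_sum_measure]
    have : ∀ n : ℕ, (∫⁻ a, ‖F a‖ₑ ∂Measure.dirac (x n)) = ‖F (x n)‖ₑ :=
      fun n => lintegral_dirac' _ hFm.stronglyMeasurable.enorm
    rw [tsum_congr this, tsum_eq_sum (s := hIfin.toFinset)
      (fun n hn => by rw [hFzero n hn]; simp)]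
    exact ENNReal.sum_lt_top.2 fun n _ => enorm_lt_top
  have hSint : ∫ y, F y ∂S = SS := by
    rw [hS, MeasureTheory.integral_sum_measure (hS ▸ hFS)]
    have h1 : ∀ n : ℕ, ∫ y, F y ∂Measure.dirac (x n) = F (x n) := fun n =>
      MeasureTheory.integral_dirac F (x n)
    rw [tsum_congr h1, tsum_eq_sum (s := hIfin.toFinset) hFzero]
    -- now a finite-sum bookkeeping
    have himg : hIfin.toFinset.image x ⊆ hAfinIoo.toFinset := by
      intro a ha
      rw [Finset.mem_image] at ha
      obtain ⟨n, hn, rfl⟩ := ha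
      rw [Set.Finite.mem_toFinset] at hn ⊢
      exact ⟨hA ▸ Set.mem_range_self n, hsuppR hn⟩
    have := Finset.sum_image (f := F) (g := x) (s := hIfin.toFinset)
      (fun n _ m _ h => hinj h)
    rw [← this]
    rw [Finset.sum_subset himg ?_]
    · rw [hSSdef, finsum_mem_eq_finite_toFinset_sum _ hAfinIoo]
      apply Finset.sum_congr rfl
      intro a ha
      rw [Set.Finite.mem_toFinset] at ha
      rw [hFdef, hLf]
      simp only [Set.indicator_of_notMem (Set.notMem_compl_iff.2 ha.1),
        Set.indicator_of_mem ha.1, zero_add]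
      ring
    · intro a haT hanot
      by_cases hga : g a = 0
      · rw [hFdef]; simp [hga]
      · exfalso
        apply hanot
        rw [Set.Finite.mem_toFinset] at haT
        have haA : a ∈ Set.range x := hA ▸ haT.1
        obtain ⟨n, rfl⟩ := haA
        apply Finset.mem_image_of_mem
        rw [Set.Finite.mem_toFinset, hIdef]
        exact subset_tsupport g hga
  -- decompose the μ-integral
  have hIμ : ∫ y, F y ∂μ = ∫ y, F y ∂volume + SS := by
    rw [hμ, MeasureTheory.integral_add_measure hFvol hFS, hSint]
  -- identify the volume part
  have hvol : ∫ y, F y ∂volume = ∫ t in Aᶜ, I₂ t := by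
    rw [MeasureTheory.integral_congr_ae hF₁F.symm]
    have : F₁ = Aᶜ.indicator (fun t => w t * (g t * ρ t)) := by
      funext t
      by_cases ht : t ∈ Aᶜ
      · simp [hF₁def, Set.indicator_of_mem ht]
      · simp [hF₁def, Set.indicator_of_notMem ht]
    rw [this, MeasureTheory.integral_indicator hAm.compl]
    apply MeasureTheory.setIntegral_congr_fun hAm.compl
    intro t _
    rw [hwdef, hI₂def]
    simp only
    rw [hlρ t]
    field_simp [(hρpos t).ne']
  -- split ∫_{Aᶜ} ψ
  have hI₁int : IntegrableOn I₁ Aᶜ volume := by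
    refine Integrable.integrableOn (main_int I₁ (fun t => M * |deriv g t * ρ t|)
      (((measurable_deriv f).mul hg'c.measurable).mul hρc.measurable)
      (continuous_const.mul (hg'c.mul hρc).abs) ?_ ?_)
    · intro t ht
      simp only [Function.mem_support, ne_eq] at ht
      by_contra htg
      exact ht (by rw [hg'0 t htg]; simp)
    · intro t ht
      rw [hI₁def]
      calc |deriv f t * deriv g t * ρ t| = |deriv f t| * |deriv g t * ρ t| := by
            rw [mul_assoc, abs_mul]
        _ ≤ M * |deriv g t * ρ t| := mul_le_mul_of_nonneg_right (hbd t ht).1 (abs_nonneg _)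
  have hI₂int : IntegrableOn I₂ Aᶜ volume := by
    refine Integrable.integrableOn (main_int I₂ (fun t => M * |g t * ρ t| + M * |g t * deriv ρ t|)
      (((measurable_deriv (deriv f)).mul hhc.measurable).add
        ((measurable_deriv f).mul (hgc.mul hρ'c).measurable))
      ((continuous_const.mul hhc.abs).add (continuous_const.mul (hgc.mul hρ'c).abs)) ?_ ?_)
    · intro t ht
      simp only [Function.mem_support, ne_eq] at ht
      by_contra htg
      exact ht (by rw [hg0 t htg]; simp)
    · intro t ht
      rw [hI₂def]
      refine (abs_add_le _ _).trans (add_le_add ?_ ?_)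
      · rw [abs_mul]; exact mul_le_mul_of_nonneg_right (hbd t ht).2 (abs_nonneg _)
      · rw [abs_mul]; exact mul_le_mul_of_nonneg_right (hbd t ht).1 (abs_nonneg _)
  have E2 : ∫ t in Aᶜ, ψ t = (∫ t in Aᶜ, I₁ t) + ∫ t in Aᶜ, I₂ t := by
    rw [hψdef]
    exact MeasureTheory.integral_add hI₁int hI₂int
  -- final assembly
  have final : (∫ t in Aᶜ, I₁ t) = -((∫ y, F y ∂volume) + SS) := by
    have e := E1
    rw [E2, ← hvol] at e
    linarith
  have hrw : (∫ y, Lf y * g y * ρ y ∂μ) = ∫ y, F y ∂μ := rfl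
  rw [hrw, hIμ]
  exact final
end
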